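/- arXiv:2512.09859 — 8 statements merged into one kernel-verified Lean document; each statement's English description precedes it below -/
import Mathlib

section
/- Let G be a graph and let H be a subgraph of G isomorphic to the subdivided star S_{2k,2k,2k} (three internally disjoint paths of length 2k emanating from a common centre x). If the centre x has degree at least 4 in G, then G contains a subgraph isomorphic to S_{1,k,k,k} (four internally disjoint paths of lengths 1, k, k, k from a common centre). -/
/-- `G` contains a "spider" (subdivided star) centred at `c` with branch lengths given by
the list `l`: internally disjoint paths of the given lengths emanating from `c`,
pairwise meeting only at `c`. -/
def HasSpiderAt {V : Type*} (G : SimpleGraph V) (c : V) (l : List ℕ) : Prop :=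
  ∃ f : Fin l.length → ℕ → V,
    (∀ i, f i 0 = c) ∧
    (∀ (i : Fin l.length) (j : ℕ), j < l.get i → G.Adj (f i j) (f i (j + 1))) ∧
    (∀ (i i' : Fin l.length) (j j' : ℕ), j ≤ l.get i → j' ≤ l.get i' →
      f i j = f i' j' → (i = i' ∧ j = j') ∨ (j = 0 ∧ j' = 0))

/-- `G` contains a subdivided star with branch lengths `l` as a subgraph. -/
def HasSpider {V : Type*} (G : SimpleGraph V) (l : List ℕ) : Prop :=
  ∃ c : V, HasSpiderAt G c l

/-- Auxiliary: from three internally disjoint `k`-paths out of `x` and an extra neighbour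
`b` of `x` avoiding them, build the spider `S_{1,k,k,k}`. -/
lemma extend_spider {V : Type*} (G : SimpleGraph V) (x : V) (k : ℕ)
    (f : ℕ → ℕ → V) (b : V)
    (hc : ∀ i, i < 3 → f i 0 = x)
    (hadj : ∀ i j, i < 3 → j < k → G.Adj (f i j) (f i (j + 1)))
    (hb : G.Adj x b)
    (hbf : ∀ i j, i < 3 → 1 ≤ j → j ≤ k → b ≠ f i j)
    (hinj : ∀ i i' j j', i < 3 → i' < 3 → j ≤ k → j' ≤ k → f i j = f i' j' →
      (i = i' ∧ j = j') ∨ (j = 0 ∧ j' = 0)) :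
    HasSpiderAt G x [1, k, k, k] := by
  have hget : ∀ a : Fin ([1, k, k, k] : List ℕ).length,
      ([1, k, k, k] : List ℕ).get a = if (a : ℕ) = 0 then 1 else k := by
    intro a; fin_cases a <;> rfl
  refine ⟨fun a n => if (a : ℕ) = 0 then (if n = 0 then x else b) else f ((a : ℕ) - 1) n,
    ?_, ?_, ?_⟩
  · intro a
    by_cases h : (a : ℕ) = 0
    · simp [h]
    · simp only [h, if_false]
      exact hc _ (by have h4 : (a : ℕ) < 4 := a.isLt; omega)
  · intro a j hj
    rw [hget] at hj
    by_cases h : (a : ℕ) = 0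
    · rw [if_pos h] at hj
      interval_cases j
      simpa [h] using hb
    · rw [if_neg h] at hj
      simp only [h, if_false]
      exact hadj _ _ (by have h4 : (a : ℕ) < 4 := a.isLt; omega) hj
  · intro a a' j j' hj hj' heq
    rw [hget] at hj hj'
    by_cases h : (a : ℕ) = 0 <;> by_cases h' : (a' : ℕ) = 0
    · rw [if_pos h] at hj; rw [if_pos h'] at hj'
      have haa : a = a' := Fin.ext (by omega)
      simp only [h, h', if_true] at heq
      by_cases hj0 : j = 0 <;> by_cases hj0' : j' = 0
      · exact Or.inr ⟨hj0, hj0'⟩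
      · rw [if_pos hj0, if_neg hj0'] at heq; exact absurd heq hb.ne
      · rw [if_neg hj0, if_pos hj0'] at heq; exact absurd heq.symm hb.ne
      · exact Or.inl ⟨haa, by omega⟩
    · rw [if_pos h] at hj; rw [if_neg h'] at hj'
      have ha3 : (a' : ℕ) - 1 < 3 := by have h4 : (a' : ℕ) < 4 := a'.isLt; omega
      simp only [h, if_true, h', if_false] at heq
      by_cases hj0 : j = 0
      · rw [if_pos hj0] at heq
        rw [← hc ((a' : ℕ) - 1) ha3] at heq
        rcases hinj _ _ _ _ ha3 ha3 (by omega) hj' heq with ⟨-, h0⟩ | ⟨-, h0⟩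
        · exact Or.inr ⟨hj0, h0.symm⟩
        · exact Or.inr ⟨hj0, h0⟩
      · rw [if_neg hj0] at heq
        by_cases hj0' : j' = 0
        · rw [hj0', hc _ ha3] at heq; exact absurd heq.symm hb.ne
        · exact absurd heq (hbf _ _ ha3 (by omega) hj')
    · rw [if_neg h] at hj; rw [if_pos h'] at hj'
      have ha3 : (a : ℕ) - 1 < 3 := by have h4 : (a : ℕ) < 4 := a.isLt; omega
      simp only [h, if_false, h', if_true] at heq
      by_cases hj0' : j' = 0
      · rw [if_pos hj0'] at heq
        rw [← hc ((a : ℕ) - 1) ha3] at heq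
        rcases hinj _ _ _ _ ha3 ha3 hj (by omega) heq with ⟨-, h0⟩ | ⟨h0, -⟩ <;>
          exact Or.inr ⟨h0, hj0'⟩
      · rw [if_neg hj0'] at heq
        by_cases hj0 : j = 0
        · rw [hj0, hc _ ha3] at heq; exact absurd heq hb.ne
        · exact absurd heq.symm (hbf _ _ ha3 (by omega) hj)
    · rw [if_neg h] at hj; rw [if_neg h'] at hj'
      have ha3 : (a : ℕ) - 1 < 3 := by have h4 : (a : ℕ) < 4 := a.isLt; omega
      have ha3' : (a' : ℕ) - 1 < 3 := by have h4 : (a' : ℕ) < 4 := a'.isLt; omega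
      simp only [h, h', if_false] at heq
      rcases hinj _ _ _ _ ha3 ha3' hj hj' heq with ⟨he, hjj⟩ | h0
      · exact Or.inl ⟨Fin.ext (by omega), hjj⟩
      · exact Or.inr h0

/-- If `G` contains `S_{2k,2k,2k}` as a subgraph with centre `x` and `x` has degree at
least `4` in `G`, then `G` contains `S_{1,k,k,k}` as a subgraph. -/
theorem stmt0 {V : Type*} (G : SimpleGraph V) (k : ℕ) (hk : 1 ≤ k) (x : V)
    (hspider : HasSpiderAt G x [2 * k, 2 * k, 2 * k])
    (hdeg : 4 ≤ (G.neighborSet x).ncard) :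
    HasSpider G [1, k, k, k] := by
  obtain ⟨f, hc, hadj, hinj⟩ := hspider
  have hget : ∀ a : Fin ([2 * k, 2 * k, 2 * k] : List ℕ).length,
      ([2 * k, 2 * k, 2 * k] : List ℕ).get a = 2 * k := by
    intro a; fin_cases a <;> rfl
  set f' : ℕ → ℕ → V := fun i n =>
    f ⟨i % 3, show i % 3 < 3 from Nat.mod_lt _ (by norm_num)⟩ n with hf'
  have hc' : ∀ i, f' i 0 = x := fun i => hc _
  have hadj' : ∀ i j, j < 2 * k → G.Adj (f' i j) (f' i (j + 1)) := by
    intro i j hjk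
    exact hadj _ j (by rw [hget]; exact hjk)
  have hinj' : ∀ i i' j j', i < 3 → i' < 3 → j ≤ 2 * k → j' ≤ 2 * k →
      f' i j = f' i' j' → (i = i' ∧ j = j') ∨ (j = 0 ∧ j' = 0) := by
    intro i i' j j' hi hi' hjle hjle' heq
    rcases hinj _ _ j j' (by rw [hget]; exact hjle) (by rw [hget]; exact hjle') heq with
      ⟨he, hjj⟩ | h0
    · refine Or.inl ⟨?_, hjj⟩
      have h2 : i % 3 = i' % 3 := by
        have := Fin.val_eq_val _ _ |>.mpr he
        simpa using this
      omega
    · exact Or.inr h0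
  -- pick a fourth neighbour y
  have hns : ¬ (G.neighborSet x ⊆ {f' 0 1, f' 1 1, f' 2 1}) := by
    intro hsub
    have h1 := Set.ncard_le_ncard hsub (Set.toFinite _)
    have h2 : ({f' 0 1, f' 1 1, f' 2 1} : Set V).ncard ≤ 3 := by
      apply le_trans (Set.ncard_insert_le _ _)
      have h3 := Set.ncard_insert_le (f' 1 1) ({f' 2 1} : Set V)
      simp only [Set.ncard_singleton] at h3
      omega
    omega
  obtain ⟨y, hy, hynot⟩ := Set.not_subset.mp hns
  have hxy : G.Adj x y := hy
  have hy1 : ∀ i, i < 3 → y ≠ f' i 1 := by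
    intro i hi
    simp only [Set.mem_insert_iff, Set.mem_singleton_iff, not_or] at hynot
    interval_cases i
    exacts [hynot.1, hynot.2.1, hynot.2.2]
  refine ⟨x, ?_⟩
  by_cases hcase : ∃ i j, i < 3 ∧ 2 ≤ j ∧ j ≤ k ∧ y = f' i j
  · -- y lies on branch i at position j, 2 ≤ j ≤ k
    obtain ⟨i, j, hi3, hj2, hjk, hyij⟩ := hcase
    refine extend_spider G x k (fun a n => if a = i ∧ n ≠ 0 then f' a (j + n - 1) else f' a n)
      (f' i 1) ?_ ?_ ?_ ?_ ?_
    · intro a ha; simp [hc']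
    · intro a n ha hn
      beta_reduce
      by_cases hai : a = i
      · subst hai
        by_cases hn0 : n = 0
        · subst hn0
          rw [if_neg (by simp), if_pos ⟨rfl, by omega⟩,
            show j + (0 + 1) - 1 = j by omega, hc', ← hyij]
          exact hxy
        · rw [if_pos ⟨rfl, hn0⟩, if_pos ⟨rfl, by omega⟩,
            show j + (n + 1) - 1 = (j + n - 1) + 1 by omega]
          exact hadj' a _ (by omega)
      · rw [if_neg (by simp [hai]), if_neg (by simp [hai])]
        exact hadj' a n (by omega)
    · have h3 := hadj' i 0 (by omega)
      rwa [hc'] at h3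
    · intro a m ha h1 hmk heq
      beta_reduce at heq
      by_cases hai : a = i
      · subst hai
        rw [if_pos ⟨rfl, by omega⟩] at heq
        rcases hinj' a a 1 (j + m - 1) ha ha (by omega) (by omega) heq with ⟨-, h2⟩ | ⟨h2, -⟩ <;>
          omega
      · rw [if_neg (by simp [hai])] at heq
        rcases hinj' i a 1 m hi3 ha (by omega) (by omega) heq with ⟨h2, -⟩ | ⟨h2, -⟩
        · exact hai h2.symm
        · omega
    · intro a a' m m' ha ha' hm hm' heq
      beta_reduce at heq
      by_cases p1 : a = i ∧ m ≠ 0 <;> by_cases p2 : a' = i ∧ m' ≠ 0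
      · rw [if_pos p1, if_pos p2] at heq
        rcases hinj' a a' _ _ ha ha' (by omega) (by omega) heq with ⟨he, hjj⟩ | ⟨h0, -⟩
        · exact Or.inl ⟨he, by omega⟩
        · omega
      · rw [if_pos p1, if_neg p2] at heq
        rcases hinj' a a' _ _ ha ha' (by omega) (by omega) heq with ⟨he, hjj⟩ | ⟨h0, -⟩
        · exfalso
          have hai' : a' = i := he ▸ p1.1
          have hm0' : m' = 0 := by tauto
          omega
        · omega
      · rw [if_neg p1, if_pos p2] at heq
        rcases hinj' a a' _ _ ha ha' (by omega) (by omega) heq with ⟨he, hjj⟩ | ⟨h0, h0'⟩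
        · exfalso
          have hai : a = i := he.symm ▸ p2.1
          have hm0 : m = 0 := by tauto
          omega
        · omega
      · rw [if_neg p1, if_neg p2] at heq
        rcases hinj' a a' _ _ ha ha' (by omega) (by omega) heq with ⟨he, hjj⟩ | h0
        · exact Or.inl ⟨he, hjj⟩
        · exact Or.inr h0
  · -- y avoids the first k vertices of every branch
    push_neg at hcase
    refine extend_spider G x k f' y (fun i hi => hc' i) (fun i j hi hj => hadj' i j (by omega))
      hxy ?_ (fun i i' j j' hi hi' hj hj' heq => hinj' i i' j j' hi hi' (by omega) (by omega) heq)
    intro i j hi h1 hjk heq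
    by_cases hj1 : j = 1
    · exact hy1 i hi (hj1 ▸ heq)
    · exact hcase i j hi (by omega) hjk heq
end

section
/- Let G be a graph containing a protected fan with vertex set F, centre z and ends x, y (so |F| ≥ 3). Then no vertex v ∈ F \ {x, y, z} belongs to any inclusion-minimal stable cutset of G. -/
/-- `S` is a cutset of `G`: deleting the vertices of `S` leaves a disconnected graph
(i.e. the graph induced on the complement of `S` is not preconnected). -/
def IsCutset {V : Type*} (G : SimpleGraph V) (S : Set V) : Prop :=
  ¬ (G.induce Sᶜ).Preconnected

/-- `S` is a stable (independent) set of `G`. -/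
def IsStableSet {V : Type*} (G : SimpleGraph V) (S : Set V) : Prop :=
  ∀ u ∈ S, ∀ v ∈ S, ¬ G.Adj u v

/-- `Q` is a protected fan in `G` with centre `z` and ends `x`, `y`: `G[Q]` is a fan
(a path `p 0, …, p (n-1)` from `x` to `y` plus the centre `z` adjacent to all path
vertices, and no further edges inside `Q`), and every non-pole vertex of `Q` has all of
its `G`-neighbours inside `Q`. -/
def IsProtectedFan {V : Type*} (G : SimpleGraph V) (Q : Set V) (z x y : V) : Prop :=
  ∃ (n : ℕ) (p : ℕ → V),
    1 ≤ n ∧ p 0 = x ∧ p (n - 1) = y ∧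
    Q = insert z {w | ∃ i, i < n ∧ p i = w} ∧
    (∀ i j, i < n → j < n → p i = p j → i = j) ∧
    (∀ i, i < n → p i ≠ z) ∧
    (∀ i, i + 1 < n → G.Adj (p i) (p (i + 1))) ∧
    (∀ i, i < n → G.Adj z (p i)) ∧
    (∀ i j, i < n → j < n → G.Adj (p i) (p j) → j = i + 1 ∨ i = j + 1) ∧
    (∀ v ∈ Q, v ≠ x → v ≠ y → v ≠ z → G.neighborSet v ⊆ Q)


private lemma reach_map {V W : Type*} {G : SimpleGraph V} {H : SimpleGraph W} (f : V → W)
    (hf : ∀ a b, G.Adj a b → H.Adj (f a) (f b) ∨ f a = f b) {a b : V}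
    (h : G.Reachable a b) : H.Reachable (f a) (f b) := by
  obtain ⟨w⟩ := h
  induction w with
  | nil => exact SimpleGraph.Reachable.refl _
  | cons hadj tail ih =>
      rcases hf _ _ hadj with h' | h'
      · exact (h'.reachable).trans ih
      · rw [h']; exact ih

/-- No non-pole vertex of a protected fan belongs to any inclusion-minimal stable
cutset of `G`. -/
theorem stmt9 {V : Type*} (G : SimpleGraph V) (Q : Set V) (z x y : V)
    (hfan : IsProtectedFan G Q z x y) (hcard : 3 ≤ Q.ncard)
    (v : V) (hv : v ∈ Q) (hvx : v ≠ x) (hvy : v ≠ y) (hvz : v ≠ z)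
    (I : Set V) (hIstable : IsStableSet G I) (hIcut : IsCutset G I)
    (hImin : ∀ J ⊆ I, IsStableSet G J → IsCutset G J → J = I) :
    v ∉ I := by
  classical
  intro hvI
  obtain ⟨n, p, hn, hp0, hpn, hQ, hinj, hpz, hpath, hzadj, hadjonly, hprot⟩ := hfan
  have hvQ := hv
  rw [hQ] at hvQ
  rcases hvQ with h | ⟨k, hk, hpk⟩
  · exact hvz h
  -- z is not in I
  have hzv : G.Adj z v := hpk ▸ hzadj k hk
  have hzI : z ∉ I := fun h => hIstable z h v hvI hzv
  -- neighbours of v are z or adjacent to z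
  have hnbr : ∀ u, G.Adj v u → u = z ∨ G.Adj z u := by
    intro u hu
    have huQ : u ∈ Q := hprot v hv hvx hvy hvz hu
    rw [hQ] at huQ
    rcases huQ with h | ⟨j, hj, rfl⟩
    · exact Or.inl h
    · exact Or.inr (hzadj j hj)
  -- J = I \ {v} is a cutset
  have hJcut : IsCutset G (I \ {v}) := by
    intro hpre
    apply hIcut
    intro a b
    have hmem : ∀ u : V, u ∈ Iᶜ → u ∈ (I \ {v})ᶜ := by
      intro u hu h'
      exact hu h'.1
    have hvmem : v ∈ (I \ {v})ᶜ := fun h' => h'.2 rfl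
    set f : ↥(I \ {v})ᶜ → ↥Iᶜ := fun u =>
      if h : (u : V) = v then ⟨z, hzI⟩
      else ⟨u, fun hI => u.2 ⟨hI, h⟩⟩ with hf
    have hfadj : ∀ a b : ↥(I \ {v})ᶜ, (G.induce (I \ {v})ᶜ).Adj a b →
        (G.induce Iᶜ).Adj (f a) (f b) ∨ f a = f b := by
      intro a b hab
      have hab' : G.Adj (a : V) (b : V) := hab
      by_cases ha : (a : V) = v
      · by_cases hb : (b : V) = v
        · exact absurd (ha ▸ hb ▸ hab') (G.irrefl)
        · have hvb : G.Adj v (b : V) := by have h' := hab'; rw [ha] at h'; exact h'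
          rw [hf]; simp only [dif_pos ha, dif_neg hb]
          rcases hnbr (b : V) hvb with h | h
          · right; exact Subtype.ext h.symm
          · left; exact h
      · by_cases hb : (b : V) = v
        · have hva : G.Adj v (a : V) := by
            have h' := hab'.symm; rw [hb] at h'; exact h'
          rw [hf]; simp only [dif_neg ha, dif_pos hb]
          rcases hnbr (a : V) hva with h | h
          · right; exact Subtype.ext h
          · left; exact h.symm
        · rw [hf]; simp only [dif_neg ha, dif_neg hb]
          exact Or.inl hab'
    have ha' : (a : V) ∈ (I \ {v})ᶜ := hmem _ a.2
    have hb' : (b : V) ∈ (I \ {v})ᶜ := hmem _ b.2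
    have hreach := hpre ⟨a, ha'⟩ ⟨b, hb'⟩
    have := reach_map f hfadj hreach
    have hav : ((⟨(a : V), ha'⟩ : ↥(I \ {v})ᶜ) : V) ≠ v := fun h => a.2 (h ▸ hvI)
    have hbv : ((⟨(b : V), hb'⟩ : ↥(I \ {v})ᶜ) : V) ≠ v := fun h => b.2 (h ▸ hvI)
    rw [hf] at this
    simp only [dif_neg hav, dif_neg hbv] at this
    convert this using 2 <;> exact Subtype.ext rfl
  -- J is stable
  have hJstable : IsStableSet G (I \ {v}) := fun a ha b hb => hIstable a ha.1 b hb.1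
  have hJI : I \ {v} ⊆ I := Set.diff_subset
  have := hImin (I \ {v}) hJI hJstable hJcut
  have h2 : v ∈ I \ {v} := by rw [this]; exact hvI
  exact h2.2 rfl
end

section
/- Let P = (p_1, …, p_n) be a path in a graph G, let u, v ∈ V(P) with u before v on P, and let T be a positive chain extension of (u, v) with respect to P with |T| = 2. Then the two jumps Z(T_1) and Z(T_2) realizing the two elements of T are vertex-disjoint except possibly at endpoints prescribed by the definition; in particular the odd path and the even path of T are disjoint. -/
/-- The vertex set of the path `p 0, p 1, …, p n`. -/
def PathVerts {V : Type*} (p : ℕ → V) (n : ℕ) : Set V := {w | ∃ i, i ≤ n ∧ p i = w}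

/-- The walk `Z` is a jump between `p a` and `p b` with respect to the path
`p 0, …, p n`: `Z` is a path, internally vertex-disjoint from the path and edge-disjoint
from the path. -/
def IsJumpWalk {V : Type*} (G : SimpleGraph V) (p : ℕ → V) (n : ℕ) (a b : ℕ)
    (Z : G.Walk (p a) (p b)) : Prop :=
  Z.IsPath ∧
  (∀ w ∈ Z.support, w ≠ p a → w ≠ p b → w ∉ PathVerts p n) ∧
  (∀ i, i < n → s(p i, p (i + 1)) ∉ Z.edges)

/-- There exists a jump between `p a` and `p b` with respect to the path `p 0, …, p n`. -/
def HasJump {V : Type*} (G : SimpleGraph V) (p : ℕ → V) (n a b : ℕ) : Prop :=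
  ∃ Z : G.Walk (p a) (p b), IsJumpWalk G p n a b Z

/-- `(p a, p b)` are the endpoints of the maximum positive jump out of the interval
`(p i, p j)` with respect to the path `p 0, …, p n`: a jump exists between `p a` and
`p b` with `i < a < j < b ≤ n`, the far endpoint `b` is as far beyond `j` as possible,
and among jumps to `p b` the near endpoint `a` minimises the distance to `b` along the
path. -/
def IsMaxPosJump {V : Type*} (G : SimpleGraph V) (p : ℕ → V) (n i j a b : ℕ) : Prop :=
  i < a ∧ a < j ∧ j < b ∧ b ≤ n ∧ HasJump G p n a b ∧
  (∀ a' b', i < a' → a' < j → j < b' → b' ≤ n → HasJump G p n a' b' → b' ≤ b) ∧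
  (∀ a', i < a' → a' < j → HasJump G p n a' b → a' ≤ a)

/-!
If the two jumps met, follow `Z1` from `p x1` to its first vertex on `Z2` and continue along
`Z2` to `p y2`. The result is again a jump: it is a path because `Z1` is cut at its first
meeting point with `Z2`, and it avoids the interior vertices of `P` because `p y1` lies beyond
the meeting point on `Z1` while `p x2` can only be on the cut part of `Z2` if it is `p x1`.
Its near endpoint `x1` lies in `(i, j)` and its far endpoint `y2` beyond `y1`, contradicting
the maximality of the first jump.
-/

namespace SimpleGraph.Walk

variable {V : Type*} {G : SimpleGraph V} {u v w : V}

lemma exists_mem_support_forall_mem_support_takeUntil [DecidableEq V] (q : G.Walk u v)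
    (S : Set V) (hS : ∃ x ∈ q.support, x ∈ S) :
    ∃ w, ∃ hw : w ∈ q.support, w ∈ S ∧ ∀ x ∈ (q.takeUntil w hw).support, x ∈ S → x = w := by
  classical
  have hex : ∃ k, ∃ x, ∃ hx : x ∈ q.support, x ∈ S ∧ (q.takeUntil x hx).length = k := by
    obtain ⟨x, hx, hxS⟩ := hS
    exact ⟨_, x, hx, hxS, rfl⟩
  obtain ⟨w, hw, hwS, hlen⟩ := Nat.find_spec hex
  refine ⟨w, hw, hwS, fun x hx hxS => ?_⟩
  by_contra hxw
  have hlt := length_takeUntil_lt_length hx hxw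
  rw [takeUntil_takeUntil, hlen] at hlt
  exact Nat.find_min hex hlt ⟨x, _, hxS, rfl⟩

lemma IsPath.eq_of_end_mem_support_takeUntil [DecidableEq V] {q : G.Walk u v} (hq : q.IsPath)
    (hw : w ∈ q.support) (hv : v ∈ (q.takeUntil w hw).support) : v = w := by
  by_contra h
  have hsplit : ((q.takeUntil w hw).append (q.dropUntil w hw)).IsPath := by rwa [take_spec]
  exact hsplit.ne_of_mem_support_of_append h hv (end_mem_support _) rfl

lemma IsPath.eq_of_start_mem_support_dropUntil [DecidableEq V] {q : G.Walk u v} (hq : q.IsPath)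
    (hw : w ∈ q.support) (hu : u ∈ (q.dropUntil w hw).support) : u = w := by
  by_contra h
  have hsplit : ((q.takeUntil w hw).append (q.dropUntil w hw)).IsPath := by rwa [take_spec]
  exact hsplit.ne_of_mem_support_of_append h (start_mem_support _) hu rfl

lemma IsPath.append_of_forall_mem_support {p : G.Walk u w} {q : G.Walk w v} (hp : p.IsPath)
    (hq : q.IsPath) (h : ∀ x ∈ p.support, x ∈ q.support → x = w) : (p.append q).IsPath := by
  rw [isPath_def, support_append]
  refine hp.support_nodup.append hq.support_nodup.tail fun x hxp hxq => ?_
  obtain rfl := h x hxp (List.mem_of_mem_tail hxq)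
  have hnodup := hq.support_nodup
  rw [← cons_tail_support, List.nodup_cons] at hnodup
  exact hnodup.1 hxq

end SimpleGraph.Walk

open SimpleGraph.Walk

section Jumps

variable {V : Type*} {G : SimpleGraph V} {p : ℕ → V} {n a b c d : ℕ}

lemma IsJumpWalk.eq_or_eq_of_mem_pathVerts {Z : G.Walk (p a) (p b)}
    (hZ : IsJumpWalk G p n a b Z) {x : V} (hx : x ∈ Z.support) (hxP : x ∈ PathVerts p n) :
    x = p a ∨ x = p b := by
  by_contra! h
  exact hZ.2.1 x hx h.1 h.2 hxP

lemma HasJump.of_mem_support_of_mem_support [DecidableEq V] {Z₁ : G.Walk (p a) (p b)}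
    {Z₂ : G.Walk (p c) (p d)} (hZ₁ : IsJumpWalk G p n a b Z₁) (hZ₂ : IsJumpWalk G p n c d Z₂)
    (hb : b ≤ n) (hc : c ≤ n) (hbc : p b ≠ p c) (hbd : p b ≠ p d) {x : V}
    (hx₁ : x ∈ Z₁.support) (hx₂ : x ∈ Z₂.support) : HasJump G p n a d := by
  obtain ⟨w, hw₁, hw₂, hfirst⟩ :=
    Z₁.exists_mem_support_forall_mem_support_takeUntil {y | y ∈ Z₂.support} ⟨x, hx₁, hx₂⟩
  have hb_notMem : p b ∉ Z₂.support := fun h =>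
    (hZ₂.eq_or_eq_of_mem_pathVerts h ⟨b, hb, rfl⟩).elim hbc hbd
  have hb_take : p b ∉ (Z₁.takeUntil w hw₁).support := fun h =>
    hb_notMem (hZ₁.1.eq_of_end_mem_support_takeUntil hw₁ h ▸ hw₂)
  have hc_drop : p c ∈ (Z₂.dropUntil w hw₂).support → p c = p a := fun h => by
    have hcw := hZ₂.1.eq_of_start_mem_support_dropUntil hw₂ h
    exact (hZ₁.eq_or_eq_of_mem_pathVerts (hcw ▸ hw₁) ⟨c, hc, rfl⟩).resolve_right hbc.symm
  refine ⟨(Z₁.takeUntil w hw₁).append (Z₂.dropUntil w hw₂),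
    (hZ₁.1.takeUntil hw₁).append_of_forall_mem_support (hZ₂.1.dropUntil hw₂) fun y hy hy₂ =>
      hfirst y hy (Z₂.support_dropUntil_subset_support hw₂ hy₂), ?_, ?_⟩
  · intro y hy hya hyd hyP
    rcases (mem_support_append_iff _ _).mp hy with hy | hy
    · rcases hZ₁.eq_or_eq_of_mem_pathVerts (Z₁.support_takeUntil_subset_support hw₁ hy) hyP
        with rfl | rfl
      exacts [hya rfl, hb_take hy]
    · rcases hZ₂.eq_or_eq_of_mem_pathVerts (Z₂.support_dropUntil_subset_support hw₂ hy) hyP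
        with rfl | rfl
      exacts [hya (hc_drop hy), hyd rfl]
  · intro k hk hmem
    rw [edges_append, List.mem_append] at hmem
    rcases hmem with h | h
    · exact hZ₁.2.2 k hk (Z₁.edges_takeUntil_subset_edges hw₁ h)
    · exact hZ₂.2.2 k hk (Z₂.edges_dropUntil_subset_edges hw₂ h)

end Jumps

theorem stmt10_general {V : Type*} (G : SimpleGraph V) (p : ℕ → V) (n : ℕ)
    (hinj : ∀ i j, i ≤ n → j ≤ n → p i = p j → i = j)
    (i j x1 y1 x2 y2 : ℕ)
    (h1 : IsMaxPosJump G p n i j x1 y1)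
    (h2 : IsMaxPosJump G p n i y1 x2 y2)
    (Z1 : G.Walk (p x1) (p y1)) (hZ1 : IsJumpWalk G p n x1 y1 Z1)
    (Z2 : G.Walk (p x2) (p y2)) (hZ2 : IsJumpWalk G p n x2 y2 Z2) :
    ∀ w ∈ Z1.support, w ∉ Z2.support := by
  classical
  obtain ⟨hix1, hx1j, hjy1, hy1n, -, hmax, -⟩ := h1
  obtain ⟨-, hx2y1, hy1y2, hy2n, -⟩ := h2
  intro w hw1 hw2
  have hjump : HasJump G p n x1 y2 :=
    HasJump.of_mem_support_of_mem_support hZ1 hZ2 hy1n (by omega)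
      (fun h => by have := hinj _ _ hy1n (by omega) h; omega)
      (fun h => by have := hinj _ _ hy1n hy2n h; omega) hw1 hw2
  have := hmax x1 y2 hix1 hx1j (by omega) hy2n hjump
  omega

/-- Let `P = p 0, …, p n` be a path in `G`, `u = p i` before `v = p j` on `P`, and let
`T = [(x1,y1),(x2,y2)]` be a positive chain extension of `(u,v)` of length `2`: so
`(x1,y1)` is the maximum positive jump out of `(u,v)` and `(x2,y2)` is the maximum
positive jump out of `(u, y1)`. Then any jumps `Z1` and `Z2` realizing the two elements
of `T` are vertex-disjoint; in particular the odd path and the even path of `T` are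
disjoint. -/
theorem stmt10 {V : Type*} (G : SimpleGraph V) (p : ℕ → V) (n : ℕ)
    (hinj : ∀ i j, i ≤ n → j ≤ n → p i = p j → i = j)
    (hadj : ∀ i, i < n → G.Adj (p i) (p (i + 1)))
    (i j x1 y1 x2 y2 : ℕ) (hij : i < j) (hjn : j ≤ n)
    (h1 : IsMaxPosJump G p n i j x1 y1)
    (h2 : IsMaxPosJump G p n i y1 x2 y2)
    (Z1 : G.Walk (p x1) (p y1)) (hZ1 : IsJumpWalk G p n x1 y1 Z1)
    (Z2 : G.Walk (p x2) (p y2)) (hZ2 : IsJumpWalk G p n x2 y2 Z2) :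
    ∀ w ∈ Z1.support, w ∉ Z2.support :=
  stmt10_general G p n hinj i j x1 y1 x2 y2 h1 h2 Z1 hZ1 Z2 hZ2
end

section
/- Let G be a graph, let C ⊆ V(G), and let S = {u, v} be two vertices of G outside C such that N(C) \ C = S. Let G' be the graph obtained from G by deleting C and adding the edge uv (if not already present). Suppose there is a u–v path in G whose internal vertices all lie in C. If G' contains S_{1,k,k,k} as a subgraph, then so does G. -/
/-- The graph obtained from `G` by deleting the vertex set `C` and adding the edge `uv`
(the vertices of `C` are left isolated). -/
def DeleteAddEdge {V : Type*} (G : SimpleGraph V) (C : Set V) (u v : V) : SimpleGraph V :=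
  SimpleGraph.fromRel (fun a b => (G.Adj a b ∧ a ∉ C ∧ b ∉ C) ∨ (a = u ∧ b = v))

open SimpleGraph

/-- A path visits each vertex at exactly one position. -/
lemma path_getVert_inj {V : Type*} {G : SimpleGraph V} {u v : V} (W : G.Walk u v)
    (hW : W.IsPath) : ∀ i ≤ W.length, ∀ j ≤ W.length,
    W.getVert i = W.getVert j → i = j := by
  induction W with
  | nil => intro i hi j hj _; simp only [Walk.length_nil, Nat.le_zero] at hi hj; omega
  | @cons a b c h p ih =>
    rw [Walk.cons_isPath_iff] at hW
    intro i hi j hj hij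
    match i, j with
    | 0, 0 => rfl
    | 0, j+1 =>
      exfalso; apply hW.2
      rw [Walk.mem_support_iff_exists_getVert]
      refine ⟨j, ?_, by simpa using hj⟩
      simpa [Walk.getVert_cons_succ] using hij.symm
    | i+1, 0 =>
      exfalso; apply hW.2
      rw [Walk.mem_support_iff_exists_getVert]
      refine ⟨i, ?_, by simpa using hi⟩
      simpa [Walk.getVert_cons_succ] using hij
    | i+1, j+1 =>
      simp only [Walk.getVert_cons_succ] at hij
      have := ih hW.1 i (by simpa using hi) j (by simpa using hj) hij
      omega

/-- Replacing one edge of a spider by a path through fresh vertices (and truncating)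
still yields a spider with the same branch lengths. -/
lemma spider_replace {V : Type*} {G : SimpleGraph V} {C : Set V} (l : List ℕ)
    (c : V) (f : Fin l.length → ℕ → V)
    (hf0 : ∀ i, f i 0 = c)
    (hfinj : ∀ (i i' : Fin l.length) (j j' : ℕ), j ≤ l.get i → j' ≤ l.get i' →
      f i j = f i' j' → (i = i' ∧ j = j') ∨ (j = 0 ∧ j' = 0))
    (hfC : ∀ (i : Fin l.length) (j : ℕ), j ≤ l.get i → f i j ∉ C)
    (i0 : Fin l.length) (j0 : ℕ) (hj0 : j0 < l.get i0)
    (P : G.Walk (f i0 j0) (f i0 (j0+1))) (hP : P.IsPath)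
    (hPm : 1 ≤ P.length)
    (hPC : ∀ t, 0 < t → t < P.length → P.getVert t ∈ C)
    (hGadj : ∀ (i : Fin l.length) (j : ℕ), j < l.get i → (i ≠ i0 ∨ j ≠ j0) →
      G.Adj (f i j) (f i (j+1))) :
    HasSpiderAt G c l := by
  classical
  set m := P.length with hm
  set g : Fin l.length → ℕ → V := fun i p =>
    if i = i0 then
      (if p ≤ j0 then f i0 p else if p ≤ j0 + m then P.getVert (p - j0)
       else f i0 (p - m + 1))
    else f i p with hg
  have gdef : ∀ p, g i0 p =
      if p ≤ j0 then f i0 p else if p ≤ j0 + m then P.getVert (p - j0)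
      else f i0 (p - m + 1) := by
    intro p; simp [hg]
  have gother : ∀ (i : Fin l.length), i ≠ i0 → ∀ p, g i p = f i p := by
    intro i hi p; simp [hg, hi]
  have hOld : ∀ p, p ≤ j0 → g i0 p = f i0 p := by
    intro p hp; rw [gdef, if_pos hp]
  have hOld2 : ∀ p, j0 + m ≤ p → g i0 p = f i0 (p - m + 1) := by
    intro p hp
    rcases eq_or_lt_of_le hp with h | h
    · rw [gdef, if_neg (by omega), if_pos (by omega)]
      have h1 : p - j0 = m := by omega
      have h2 : p - m + 1 = j0 + 1 := by omega
      rw [h1, h2, hm, Walk.getVert_length]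
    · rw [gdef, if_neg (by omega), if_neg (by omega)]
  have hInt : ∀ p, j0 ≤ p → p ≤ j0 + m → g i0 p = P.getVert (p - j0) := by
    intro p hp1 hp2
    rcases eq_or_lt_of_le hp1 with h | h
    · rw [← h, hOld j0 le_rfl]
      have : j0 - j0 = 0 := by omega
      rw [this, Walk.getVert_zero]
    · rw [gdef, if_neg (by omega), if_pos hp2]
  have getInj : ∀ s ≤ m, ∀ t ≤ m, P.getVert s = P.getVert t → s = t :=
    path_getVert_inj P hP
  refine ⟨g, ?_, ?_, ?_⟩
  · intro i
    by_cases hi : i = i0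
    · rw [hi, hOld 0 (by omega), hf0]
    · rw [gother i hi, hf0]
  · intro i p hp
    by_cases hi : i = i0
    · rw [hi] at hp ⊢
      rcases lt_or_ge p j0 with h1 | h1
      · rw [hOld p (by omega), hOld (p+1) (by omega)]
        exact hGadj i0 p hp (Or.inr (by omega))
      · rcases lt_or_ge p (j0 + m) with h2 | h2
        · rw [hInt p h1 (by omega), hInt (p+1) (by omega) (by omega)]
          have e : p + 1 - j0 = (p - j0) + 1 := by omega
          rw [e]
          exact P.adj_getVert_succ (by omega)
        · rw [hOld2 p h2, hOld2 (p+1) (by omega)]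
          have e : p + 1 - m + 1 = (p - m + 1) + 1 := by omega
          rw [e]
          exact hGadj i0 (p - m + 1) (by omega) (Or.inr (by omega))
    · rw [gother i hi p, gother i hi (p+1)]
      exact hGadj i p hp (Or.inl hi)
  · intro i i' j j' hj hj' heq
    by_cases hi : i = i0 <;> by_cases hi' : i' = i0
    · rw [hi, hi'] at heq
      rw [hi] at hj; rw [hi'] at hj'
      have hii' : i = i' := hi.trans hi'.symm
      rcases lt_or_ge j0 j with h1 | h1
      · rcases lt_or_ge j (j0 + m) with h2 | h2
        · -- j internal
          have hjC : g i0 j ∈ C := by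
            rw [hInt j (by omega) (by omega)]
            exact hPC (j - j0) (by omega) (by omega)
          rcases lt_or_ge j0 j' with h1' | h1'
          · rcases lt_or_ge j' (j0 + m) with h2' | h2'
            · -- both internal
              rw [hInt j (by omega) (by omega), hInt j' (by omega) (by omega)] at heq
              have := getInj (j - j0) (by omega) (j' - j0) (by omega) heq
              exact Or.inl ⟨hii', by omega⟩
            · exfalso
              rw [heq, hOld2 j' h2'] at hjC
              exact hfC i0 (j' - m + 1) (by omega) hjC
          · exfalso
            rw [heq, hOld j' h1'] at hjC
            exact hfC i0 j' (by omega) hjC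
        · -- j in second old region
          rw [hOld2 j h2] at heq
          rcases lt_or_ge j0 j' with h1' | h1'
          · rcases lt_or_ge j' (j0 + m) with h2' | h2'
            · exfalso
              have hjC : g i0 j' ∈ C := by
                rw [hInt j' (by omega) (by omega)]
                exact hPC (j' - j0) (by omega) (by omega)
              rw [← heq] at hjC
              exact hfC i0 (j - m + 1) (by omega) hjC
            · rw [hOld2 j' h2'] at heq
              have := hfinj i0 i0 (j - m + 1) (j' - m + 1) (by omega) (by omega) heq
              exact Or.inl ⟨hii', by omega⟩
          · rw [hOld j' h1'] at heq
            have := hfinj i0 i0 (j - m + 1) j' (by omega) (by omega) heq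
            exact Or.inl ⟨hii', by omega⟩
      · -- j in first old region
        rw [hOld j h1] at heq
        rcases lt_or_ge j0 j' with h1' | h1'
        · rcases lt_or_ge j' (j0 + m) with h2' | h2'
          · exfalso
            have hjC : g i0 j' ∈ C := by
              rw [hInt j' (by omega) (by omega)]
              exact hPC (j' - j0) (by omega) (by omega)
            rw [← heq] at hjC
            exact hfC i0 j (by omega) hjC
          · rw [hOld2 j' h2'] at heq
            have := hfinj i0 i0 j (j' - m + 1) (by omega) (by omega) heq
            exact Or.inl ⟨hii', by omega⟩
        · rw [hOld j' h1'] at heq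
          have := hfinj i0 i0 j j' (by omega) (by omega) heq
          rcases this with ⟨_, h⟩ | ⟨h, h'⟩
          · exact Or.inl ⟨hii', h⟩
          · exact Or.inr ⟨h, h'⟩
    · -- i = i0, i' ≠ i0
      rw [hi] at heq hj
      rw [gother i' hi' j'] at heq
      rcases lt_or_ge j0 j with h1 | h1
      · rcases lt_or_ge j (j0 + m) with h2 | h2
        · exfalso
          have hjC : g i0 j ∈ C := by
            rw [hInt j (by omega) (by omega)]
            exact hPC (j - j0) (by omega) (by omega)
          rw [heq] at hjC
          exact hfC i' j' hj' hjC
        · rw [hOld2 j h2] at heq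
          rcases hfinj i0 i' (j - m + 1) j' (by omega) hj' heq with ⟨h, _⟩ | ⟨h, h'⟩
          · exact absurd h.symm hi'
          · omega
      · rw [hOld j h1] at heq
        rcases hfinj i0 i' j j' (by omega) hj' heq with ⟨h, _⟩ | ⟨h, h'⟩
        · exact absurd h.symm hi'
        · exact Or.inr ⟨h, h'⟩
    · -- i ≠ i0, i' = i0
      rw [hi'] at heq hj'
      rw [gother i hi j] at heq
      rcases lt_or_ge j0 j' with h1 | h1
      · rcases lt_or_ge j' (j0 + m) with h2 | h2
        · exfalso
          have hjC : g i0 j' ∈ C := by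
            rw [hInt j' (by omega) (by omega)]
            exact hPC (j' - j0) (by omega) (by omega)
          rw [← heq] at hjC
          exact hfC i j hj hjC
        · rw [hOld2 j' h2] at heq
          rcases hfinj i i0 j (j' - m + 1) hj (by omega) heq with ⟨h, _⟩ | ⟨h, h'⟩
          · exact absurd h hi
          · omega
      · rw [hOld j' h1] at heq
        rcases hfinj i i0 j j' hj (by omega) heq with ⟨h, _⟩ | ⟨h, h'⟩
        · exact absurd h hi
        · exact Or.inr ⟨h, h'⟩
    · rw [gother i hi j, gother i' hi' j'] at heq
      exact hfinj i i' j j' hj hj' heq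

/-- Let `C ⊆ V(G)` with external neighbourhood exactly `S = {u, v}`, and let `G'` be
obtained from `G` by deleting `C` and adding the edge `uv`. If there is a `u`–`v` path in
`G` whose internal vertices all lie in `C`, and `G'` contains `S_{1,k,k,k}` as a
subgraph, then so does `G`. -/
theorem stmt12 {V : Type*} (G : SimpleGraph V) (k : ℕ) (hk : 1 ≤ k) (C : Set V)
    (u v : V) (huC : u ∉ C) (hvC : v ∉ C) (huv : u ≠ v)
    (hN : {w | w ∉ C ∧ ∃ c ∈ C, G.Adj c w} = {u, v})
    (W : G.Walk u v) (hWpath : W.IsPath)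
    (hWint : ∀ w ∈ W.support, w ≠ u → w ≠ v → w ∈ C)
    (h : HasSpider (DeleteAddEdge G C u v) [1, k, k, k]) :
    HasSpider G [1, k, k, k] := by
  classical
  obtain ⟨c, f, hf0, hfadj, hfinj⟩ := h
  have hlen : ∀ i : Fin ([1, k, k, k] : List ℕ).length, 1 ≤ ([1, k, k, k] : List ℕ).get i := by
    intro i; fin_cases i <;> simp [List.get] <;> omega
  -- endpoints of edges of G' are outside C
  have hedge : ∀ a b, (DeleteAddEdge G C u v).Adj a b →
      a ∉ C ∧ b ∉ C ∧ (G.Adj a b ∨ (a = u ∧ b = v) ∨ (a = v ∧ b = u)) := by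
    intro a b hab
    rw [DeleteAddEdge, SimpleGraph.fromRel_adj] at hab
    obtain ⟨hne, h1 | h1⟩ := hab
    · rcases h1 with ⟨hg, ha, hb⟩ | ⟨ha, hb⟩
      · exact ⟨ha, hb, Or.inl hg⟩
      · subst ha; subst hb; exact ⟨huC, hvC, Or.inr (Or.inl ⟨rfl, rfl⟩)⟩
    · rcases h1 with ⟨hg, hb, ha⟩ | ⟨hb, ha⟩
      · exact ⟨ha, hb, Or.inl hg.symm⟩
      · subst ha; subst hb; exact ⟨hvC, huC, Or.inr (Or.inr ⟨rfl, rfl⟩)⟩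
  have hfC : ∀ (i : Fin ([1, k, k, k] : List ℕ).length) (j : ℕ), j ≤ ([1, k, k, k] : List ℕ).get i → f i j ∉ C := by
    intro i j hj
    rcases Nat.eq_zero_or_pos j with rfl | hj0
    · exact (hedge _ _ (hfadj i 0 (hlen i))).1
    · have h1 := hfadj i (j - 1) (by omega)
      have e : j - 1 + 1 = j := by omega
      rw [e] at h1
      exact (hedge _ _ h1).2.1
  by_cases hall : ∀ (i : Fin ([1, k, k, k] : List ℕ).length) (j : ℕ),
      j < ([1, k, k, k] : List ℕ).get i → G.Adj (f i j) (f i (j+1))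
  · exact ⟨c, f, hf0, hall, hfinj⟩
  push_neg at hall
  obtain ⟨i0, j0, hj0, hnadj⟩ := hall
  have huv0 : (f i0 j0 = u ∧ f i0 (j0+1) = v) ∨ (f i0 j0 = v ∧ f i0 (j0+1) = u) := by
    rcases (hedge _ _ (hfadj i0 j0 hj0)).2.2 with hg | h1 | h1
    · exact absurd hg hnadj
    · exact Or.inl h1
    · exact Or.inr h1
  -- the pair {u,v} occurs only at (i0, j0)
  have hGadj : ∀ (i : Fin ([1, k, k, k] : List ℕ).length) (j : ℕ),
      j < ([1, k, k, k] : List ℕ).get i → (i ≠ i0 ∨ j ≠ j0) →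
      G.Adj (f i j) (f i (j+1)) := by
    intro i j hj hne
    rcases (hedge _ _ (hfadj i j hj)).2.2 with hg | ⟨h1, h2⟩ | ⟨h1, h2⟩
    · exact hg
    · exfalso
      rcases huv0 with ⟨e1, e2⟩ | ⟨e1, e2⟩
      · rcases hfinj i0 i j0 j (by omega) (by omega) (e1.trans h1.symm) with
          ⟨hi, hj'⟩ | ⟨hz, hz'⟩
        · rcases hne with hne | hne
          · exact hne (hi.symm) |>.elim
          · exact hne hj'.symm |>.elim
        · rcases hfinj i0 i (j0+1) (j+1) (by omega) (by omega)
            (e2.trans h2.symm) with ⟨hi, hj'⟩ | ⟨hz2, hz2'⟩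
          · rcases hne with hne | hne
            · exact hne hi.symm |>.elim
            · omega
          · omega
      · rcases hfinj i0 i (j0+1) j (by omega) (by omega) (e2.trans h1.symm) with
          ⟨hi, hj'⟩ | ⟨hz, hz'⟩
        · subst hi
          rcases hfinj i0 i0 j0 (j+1) (by omega) (by omega) (e1.trans h2.symm) with
            ⟨_, hj2⟩ | ⟨hz2, hz2'⟩ <;> omega
        · omega
    · exfalso
      rcases huv0 with ⟨e1, e2⟩ | ⟨e1, e2⟩
      · rcases hfinj i0 i (j0+1) j (by omega) (by omega) (e2.trans h1.symm) with
          ⟨hi, hj'⟩ | ⟨hz, hz'⟩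
        · subst hi
          rcases hfinj i0 i0 j0 (j+1) (by omega) (by omega) (e1.trans h2.symm) with
            ⟨_, hj2⟩ | ⟨hz2, hz2'⟩ <;> omega
        · omega
      · rcases hfinj i0 i j0 j (by omega) (by omega) (e1.trans h1.symm) with
          ⟨hi, hj'⟩ | ⟨hz, hz'⟩
        · rcases hne with hne | hne
          · exact hne hi.symm |>.elim
          · exact hne hj'.symm |>.elim
        · rcases hfinj i0 i (j0+1) (j+1) (by omega) (by omega)
            (e2.trans h2.symm) with ⟨hi, hj'⟩ | ⟨hz2, hz2'⟩
          · rcases hne with hne | hne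
            · exact hne hi.symm |>.elim
            · omega
          · omega
  -- W has positive length and internal vertices in C
  have hWlen : 1 ≤ W.length := by
    rcases Nat.eq_zero_or_pos W.length with h0 | h0
    · exact absurd (Walk.eq_of_length_eq_zero h0) huv
    · exact h0
  have hWC : ∀ t, 0 < t → t < W.length → W.getVert t ∈ C := by
    intro t ht1 ht2
    have hmem : W.getVert t ∈ W.support := by
      rw [Walk.mem_support_iff_exists_getVert]; exact ⟨t, rfl, by omega⟩
    apply hWint _ hmem
    · intro hu
      have : W.getVert t = W.getVert 0 := by rw [hu, Walk.getVert_zero]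
      have := path_getVert_inj W hWpath t (by omega) 0 (by omega) this
      omega
    · intro hv
      have : W.getVert t = W.getVert W.length := by rw [hv, Walk.getVert_length]
      have := path_getVert_inj W hWpath t (by omega) W.length le_rfl this
      omega
  rcases huv0 with ⟨e1, e2⟩ | ⟨e1, e2⟩
  · refine ⟨c, spider_replace [1, k, k, k] c f hf0 hfinj hfC i0 j0 hj0
      (W.copy e1.symm e2.symm) ?_ ?_ ?_ hGadj⟩
    · rwa [Walk.isPath_copy]
    · rwa [Walk.length_copy]
    · intro t ht1 ht2
      rw [Walk.length_copy] at ht2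
      rw [Walk.getVert_copy]
      exact hWC t ht1 ht2
  · refine ⟨c, spider_replace [1, k, k, k] c f hf0 hfinj hfC i0 j0 hj0
      (W.reverse.copy e1.symm e2.symm) ?_ ?_ ?_ hGadj⟩
    · rw [Walk.isPath_copy]; exact hWpath.reverse
    · rw [Walk.length_copy, Walk.length_reverse]; exact hWlen
    · intro t ht1 ht2
      rw [Walk.length_copy, Walk.length_reverse] at ht2
      rw [Walk.getVert_copy, Walk.getVert_reverse]
      exact hWC (W.length - t) (by omega) (by omega)
end

section
/- Let G be a connected graph and let S = {u, v} be a clique cutset of size 2 (u and v adjacent, and G − S disconnected). Then G has a stable cutset if and only if there exists a connected component C of G − S such that the induced subgraph G[V(C) ∪ S] has a stable cutset. -/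
section Aux

variable {V : Type*}

/-- Reachability within a vertex set `T`. -/
inductive ReachIn (G : SimpleGraph V) (T : Set V) : V → V → Prop
  | refl (x : V) (hx : x ∈ T) : ReachIn G T x x
  | tail {x y z : V} (h : ReachIn G T x y) (hadj : G.Adj y z) (hz : z ∈ T) : ReachIn G T x z

namespace ReachIn

variable {G : SimpleGraph V} {T T' A : Set V} {x y z : V}

lemma mem_right (h : ReachIn G T x y) : y ∈ T := by
  cases h with
  | refl hx => exact hx
  | tail _ _ hz => exact hz

lemma trans (h1 : ReachIn G T x y) (h2 : ReachIn G T y z) : ReachIn G T x z := by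
  induction h2 with
  | refl _ => exact h1
  | tail _ hadj hz ih => exact .tail ih hadj hz

lemma single (hx : x ∈ T) (hy : y ∈ T) (h : G.Adj x y) : ReachIn G T x y :=
  .tail (.refl x hx) h hy

lemma symm (h : ReachIn G T x y) : ReachIn G T y x := by
  induction h with
  | refl ha => exact .refl _ ha
  | tail h hadj hz ih => exact trans (single hz h.mem_right hadj.symm) ih

lemma mono (hT : T ⊆ T') (h : ReachIn G T x y) : ReachIn G T' x y := by
  induction h with
  | refl ha => exact .refl _ (hT ha)
  | tail _ hadj hz ih => exact .tail ih hadj (hT hz)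

lemma closed (hA : ∀ a ∈ A, ∀ b ∈ T, G.Adj a b → b ∈ A)
    (h : ReachIn G T x y) (hx : x ∈ A) : y ∈ A := by
  induction h with
  | refl _ => exact hx
  | tail _ hadj hz ih => exact hA _ ih _ hz hadj

lemma self_set (h : ReachIn G T x y) : ReachIn G {b | ReachIn G T x b} x y := by
  induction h with
  | refl ha => exact .refl _ (.refl _ ha)
  | tail h hadj hz ih => exact .tail ih hadj (.tail h hadj hz)

end ReachIn

lemma reachable_iff_reachIn {W : Type*} {G : SimpleGraph V} {K : SimpleGraph W}
    {f : W → V} (hinj : Function.Injective f)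
    (hf : ∀ a b, K.Adj a b ↔ G.Adj (f a) (f b)) (x y : W) :
    K.Reachable x y ↔ ReachIn G (Set.range f) (f x) (f y) := by
  constructor
  · rintro ⟨p⟩
    induction p with
    | nil => exact .refl _ ⟨_, rfl⟩
    | cons h p ih =>
        exact ReachIn.trans (ReachIn.single ⟨_, rfl⟩ ⟨_, rfl⟩ ((hf _ _).1 h)) ih
  · intro h
    have key : ∀ c, ReachIn G (Set.range f) (f x) c → ∀ y, f y = c → K.Reachable x y := by
      intro c hc
      induction hc with
      | refl ha =>
          intro y hy
          cases hinj hy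
          exact SimpleGraph.Reachable.refl x
      | tail h hadj hc ih =>
          intro y hy
          obtain ⟨y', hy'⟩ := h.mem_right
          exact (ih y' hy').trans ((hf y' y).2 (by rw [hy', hy]; exact hadj)).reachable
    exact key _ h y rfl

lemma induce_reachable_iff {G : SimpleGraph V} {T : Set V} (x y : ↥T) :
    (G.induce T).Reachable x y ↔ ReachIn G T ↑x ↑y := by
  have := reachable_iff_reachIn (K := G.induce T) (f := (Subtype.val : ↥T → V))
    Subtype.val_injective (fun a b => Iff.rfl) x y
  rwa [Subtype.range_coe] at this

lemma induce_induce_reachable_iff {G : SimpleGraph V} {T : Set V} {U : Set ↥T} (x y : ↥U) :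
    ((G.induce T).induce U).Reachable x y ↔
      ReachIn G {a : V | ∃ h : a ∈ T, (⟨a, h⟩ : ↥T) ∈ U} ↑(↑x : ↥T) ↑(↑y : ↥T) := by
  have hinj : Function.Injective (fun z : ↥U => ((z : ↥T) : V)) := by
    intro a b h
    exact Subtype.ext (Subtype.ext h)
  have := reachable_iff_reachIn (K := (G.induce T).induce U)
    (f := fun z : ↥U => ((z : ↥T) : V)) hinj (fun a b => Iff.rfl) x y
  have hr : Set.range (fun z : ↥U => ((z : ↥T) : V)) =
      {a : V | ∃ h : a ∈ T, (⟨a, h⟩ : ↥T) ∈ U} := by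
    ext a
    constructor
    · rintro ⟨z, rfl⟩
      exact ⟨(z : ↥T).2, z.2⟩
    · rintro ⟨h, hU⟩
      exact ⟨⟨⟨a, h⟩, hU⟩, rfl⟩
  rwa [hr] at this

end Aux

/-- `G` has a stable cutset: an independent set whose removal disconnects `G`. -/
def HasStableCutset {V : Type*} (G : SimpleGraph V) : Prop :=
  ∃ I : Set V, IsStableSet G I ∧ IsCutset G I

/-- Let `G` be connected with a clique cutset `S = {u, v}` of size `2` (`u` and `v`
adjacent and `G − S` disconnected). Then `G` has a stable cutset iff there is a
connected component `C` of `G − S` such that `G[V(C) ∪ S]` has a stable cutset. -/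
theorem stmt14 {V : Type*} [Fintype V] (G : SimpleGraph V) (hconn : G.Connected)
    (u v : V) (huv : G.Adj u v) (hcut : IsCutset G {u, v}) :
    HasStableCutset G ↔
      ∃ C : (G.induce ({u, v}ᶜ : Set V)).ConnectedComponent,
        HasStableCutset (G.induce ((Subtype.val '' C.supp) ∪ {u, v})) := by
  classical
  constructor
  · rintro ⟨I, hIstab, hIcut⟩
    obtain ⟨x, y, hxy⟩ : ∃ x y : ↥(Iᶜ), ¬ (G.induce Iᶜ).Reachable x y := by
      by_contra h
      push_neg at h
      exact hIcut h
    have hxy' : ¬ ReachIn G Iᶜ ↑x ↑y := fun h => hxy ((induce_reachable_iff x y).2 h)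
    have hSnot : u ∉ I ∨ v ∉ I := by
      by_contra h
      push_neg at h
      exact hIstab u h.1 v h.2 huv
    obtain ⟨w, hwS, hwI, hwall⟩ :
        ∃ w, w ∈ ({u, v} : Set V) ∧ w ∉ I ∧
          ∀ s ∈ ({u, v} : Set V), s ∉ I → ReachIn G Iᶜ w s := by
      rcases hSnot with hu | hv
      · refine ⟨u, Or.inl rfl, hu, ?_⟩
        intro s hs hsI
        rcases hs with rfl | rfl
        · exact .refl _ hu
        · exact .single hu hsI huv
      · refine ⟨v, Or.inr rfl, hv, ?_⟩
        intro s hs hsI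
        rcases hs with rfl | rfl
        · exact .single hv hsI huv.symm
        · exact .refl _ hv
    obtain ⟨z, hzI, hz⟩ : ∃ z, z ∈ Iᶜ ∧ ¬ ReachIn G Iᶜ w z := by
      by_cases hR : ReachIn G Iᶜ w ↑x
      · exact ⟨↑y, y.2, fun h => hxy' (hR.symm.trans h)⟩
      · exact ⟨↑x, x.2, hR⟩
    set A : Set V := {a | ReachIn G Iᶜ z a} with hA
    have hzA : z ∈ A := .refl _ hzI
    have hAS : ∀ s ∈ ({u, v} : Set V), s ∉ A := by
      intro s hsS hsA
      exact hz ((hwall s hsS hsA.mem_right).trans hsA.symm)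
    have hzS : z ∈ ({u, v}ᶜ : Set V) := fun h => hAS z h hzA
    set C := (G.induce ({u, v}ᶜ : Set V)).connectedComponentMk ⟨z, hzS⟩ with hC
    have hAC : ∀ a ∈ A, a ∈ Subtype.val '' C.supp := by
      intro a ha
      have h1 : ReachIn G A z a := ha.self_set
      have h2 : ReachIn G ({u, v}ᶜ : Set V) z a :=
        h1.mono (fun b hb hbS => hAS b hbS hb)
      have haS : a ∈ ({u, v}ᶜ : Set V) := h2.mem_right
      refine ⟨⟨a, haS⟩, ?_, rfl⟩
      rw [SimpleGraph.ConnectedComponent.mem_supp_iff, hC]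
      exact SimpleGraph.ConnectedComponent.sound
        (((induce_reachable_iff (⟨z, hzS⟩ : ↥({u, v}ᶜ : Set V)) ⟨a, haS⟩).2 h2).symm)
    refine ⟨C, {i | (↑i : V) ∈ I}, ?_, ?_⟩
    · intro a ha b hb hab
      exact hIstab ↑a ha ↑b hb hab
    · intro hp
      have hzT : z ∈ (Subtype.val '' C.supp) ∪ {u, v} := Or.inl (hAC z hzA)
      have hwT : w ∈ (Subtype.val '' C.supp) ∪ {u, v} := Or.inr hwS
      have hr := hp ⟨⟨z, hzT⟩, hzI⟩ ⟨⟨w, hwT⟩, hwI⟩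
      have h1 := (induce_induce_reachable_iff _ _).1 hr
      have hsub : {a : V | ∃ h : a ∈ (Subtype.val '' C.supp) ∪ {u, v},
          (⟨a, h⟩ : ↥((Subtype.val '' C.supp) ∪ {u, v})) ∈
            ({i : ↥((Subtype.val '' C.supp) ∪ {u, v}) | (↑i : V) ∈ I}ᶜ : Set _)} ⊆ Iᶜ := by
        rintro a ⟨haT, haI⟩
        exact haI
      exact hz (h1.mono hsub).symm
  · rintro ⟨C, hC⟩
    set T' : Set V := Subtype.val '' C.supp ∪ {u, v} with hT'
    obtain ⟨I', hstab, hcut⟩ := hC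
    set J : Set V := {a | ∃ h : a ∈ T', (⟨a, h⟩ : ↥T') ∈ I'} with hJ
    have hSsubT : ∀ s ∈ ({u, v} : Set V), s ∈ T' := fun s hs => Or.inr hs
    set B : Set V := {a : V | ∃ h : a ∈ T', (⟨a, h⟩ : ↥T') ∈ (I'ᶜ : Set _)} with hBeq
    have hBdef : ∀ a : V, a ∈ B ↔ (a ∈ T' ∧ a ∉ J) := by
      intro a
      constructor
      · rintro ⟨h, hI⟩
        refine ⟨h, ?_⟩
        rintro ⟨h2, hI2⟩
        exact hI hI2
      · rintro ⟨h, hJa⟩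
        exact ⟨h, fun hI => hJa ⟨h, hI⟩⟩
    have hBsub : B ⊆ Jᶜ := fun a ha => ((hBdef a).1 ha).2
    have hBT : B ⊆ T' := fun a ha => ((hBdef a).1 ha).1
    have hmemB : ∀ a, a ∈ T' → a ∉ J → a ∈ B := fun a h1 h2 => (hBdef a).2 ⟨h1, h2⟩
    have hSnot : u ∉ J ∨ v ∉ J := by
      by_contra h
      push_neg at h
      obtain ⟨⟨hu, huI⟩, ⟨hv, hvI⟩⟩ := h
      exact hstab ⟨u, hu⟩ huI ⟨v, hv⟩ hvI huv
    obtain ⟨w, hwS, hwJ, hwall⟩ :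
        ∃ w, w ∈ ({u, v} : Set V) ∧ w ∉ J ∧
          ∀ s ∈ ({u, v} : Set V), s ∉ J → ReachIn G B w s := by
      rcases hSnot with hu | hv
      · refine ⟨u, Or.inl rfl, hu, ?_⟩
        intro s hs hsJ
        rcases hs with rfl | rfl
        · exact .refl _ (hmemB _ (hSsubT _ (Or.inl rfl)) hu)
        · exact .single (hmemB _ (hSsubT _ (Or.inl rfl)) hu)
            (hmemB _ (hSsubT _ (Or.inr rfl)) hsJ) huv
      · refine ⟨v, Or.inr rfl, hv, ?_⟩
        intro s hs hsJ
        rcases hs with rfl | rfl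
        · exact .single (hmemB _ (hSsubT _ (Or.inr rfl)) hv)
            (hmemB _ (hSsubT _ (Or.inl rfl)) hsJ) huv.symm
        · exact .refl _ (hmemB _ (hSsubT _ (Or.inr rfl)) hv)
    obtain ⟨x, y, hxy⟩ : ∃ x y : ↥(I'ᶜ), ¬ ((G.induce T').induce (I'ᶜ : Set _)).Reachable x y := by
      by_contra h
      push_neg at h
      exact hcut h
    have hxy' : ¬ ReachIn G B ↑(↑x : ↥T') ↑(↑y : ↥T') :=
      fun h => hxy ((induce_induce_reachable_iff x y).2 h)
    obtain ⟨z, hzB, hz⟩ : ∃ z, z ∈ B ∧ ¬ ReachIn G B w z := by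
      by_cases hR : ReachIn G B w ↑(↑x : ↥T')
      · exact ⟨_, ⟨(↑y : ↥T').2, y.2⟩, fun h => hxy' (hR.symm.trans h)⟩
      · exact ⟨_, ⟨(↑x : ↥T').2, x.2⟩, hR⟩
    set A : Set V := {a | ReachIn G B z a} with hA
    have hzA : z ∈ A := .refl _ hzB
    have hAB : A ⊆ B := fun a ha => ha.mem_right
    have hAS : ∀ s ∈ ({u, v} : Set V), s ∉ A := by
      intro s hsS hsA
      exact hz ((hwall s hsS (hBsub hsA.mem_right)).trans hsA.symm)
    have hAC : ∀ a ∈ A, a ∈ Subtype.val '' C.supp := by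
      intro a ha
      rcases hBT (hAB ha) with h | h
      · exact h
      · exact (hAS a h ha).elim
    have hclosed : ∀ a ∈ A, ∀ b ∈ Jᶜ, G.Adj a b → b ∈ A := by
      intro a ha b hb hab
      by_cases hbS : b ∈ ({u, v} : Set V)
      · exact ReachIn.tail ha hab (hmemB b (hSsubT b hbS) hb)
      · obtain ⟨⟨a', ha'S⟩, ha'C, rfl⟩ := hAC a ha
        have hadj : (G.induce ({u, v}ᶜ : Set V)).Adj ⟨b, hbS⟩ ⟨a', ha'S⟩ := hab.symm
        have hbC : (⟨b, hbS⟩ : ↥({u, v}ᶜ : Set V)) ∈ C.supp := by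
          rw [SimpleGraph.ConnectedComponent.mem_supp_iff]
          rw [SimpleGraph.ConnectedComponent.mem_supp_iff] at ha'C
          rw [← ha'C]
          exact SimpleGraph.ConnectedComponent.sound hadj.reachable
        have hbT : b ∈ T' := Or.inl ⟨⟨b, hbS⟩, hbC, rfl⟩
        exact ReachIn.tail ha hab (hmemB b hbT hb)
    refine ⟨J, ?_, ?_⟩
    · rintro a ⟨ha, haI⟩ b ⟨hb, hbI⟩ hab
      exact hstab ⟨a, ha⟩ haI ⟨b, hb⟩ hbI hab
    · intro hp
      have hr := hp ⟨z, hBsub hzB⟩ ⟨w, hwJ⟩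
      have h2 : ReachIn G Jᶜ z w := (induce_reachable_iff _ _).1 hr
      exact hAS w hwS (ReachIn.closed hclosed h2 hzA)
end

section
/- Let G be a graph, r ≥ 1, let C ⊆ V(G) with external neighbourhood exactly S = {u, v} (u, v ∉ C), and suppose every proper r-colouring of G[C ∪ S] assigns u and v the same colour, and at least one such colouring exists. Let G' be obtained from G by deleting C ∪ {u, v} and adding a new vertex w adjacent to exactly (N_G(u) ∪ N_G(v)) \ (C ∪ {u,v}). Then G is properly r-colourable if and only if G' is properly r-colourable. -/
/-- Adjacency relation of the graph obtained from `G` by deleting the vertices outside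
`s` and contracting the (deleted) vertices `u` and `v` into a single new vertex `none`:
on `Option ↥s`, two old vertices are adjacent iff they were adjacent in `G`, and the
new vertex `none` is adjacent to exactly the old vertices adjacent to `u` or `v`. -/
def ContractAdj {V : Type*} (G : SimpleGraph V) (u v : V) (s : Set V) :
    Option ↥s → Option ↥s → Prop
  | some a, some b => G.Adj (a : V) (b : V)
  | none, some a => G.Adj u (a : V) ∨ G.Adj v (a : V)
  | some _, none => False
  | none, none => False

/-- Let `C ⊆ V(G)` have external neighbourhood exactly `S = {u, v}` and suppose every
proper `r`-colouring of `G[C ∪ S]` gives `u` and `v` the same colour, and some such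
colouring exists. Let `G'` be obtained from `G` by deleting `C ∪ {u, v}` and adding a
new vertex `w` adjacent to exactly `(N(u) ∪ N(v)) \ (C ∪ {u, v})`. Then `G` is properly
`r`-colourable iff `G'` is. -/
theorem stmt15 {V : Type*} (G : SimpleGraph V) (r : ℕ) (hr : 1 ≤ r)
    (C : Set V) (u v : V) (huC : u ∉ C) (hvC : v ∉ C) (huv : u ≠ v)
    (hN : {w | w ∉ C ∧ ∃ c ∈ C, G.Adj c w} = {u, v})
    (hu : u ∈ C ∪ {u, v}) (hv : v ∈ C ∪ {u, v})
    (hsame : ∀ col : (G.induce (C ∪ {u, v})).Coloring (Fin r),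
      col ⟨u, hu⟩ = col ⟨v, hv⟩)
    (hex : (G.induce (C ∪ {u, v})).Colorable r) :
    G.Colorable r ↔
      (SimpleGraph.fromRel (ContractAdj G u v ((C ∪ {u, v})ᶜ))).Colorable r := by
  set S : Set V := C ∪ {u, v} with hSdef
  -- key: every vertex of S adjacent to something outside S is u or v
  have hkey : ∀ x ∈ S, ∀ y ∉ S, G.Adj x y → x = u ∨ x = v := by
    intro x hx y hy hadj
    rcases hx with hxC | hxuv
    · exfalso
      have hyC : y ∉ C := fun h => hy (Or.inl h)
      have : y ∈ ({u, v} : Set V) := by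
        rw [← hN]; exact ⟨hyC, x, hxC, hadj⟩
      exact hy (Or.inr this)
    · rcases hxuv with h | h
      · exact Or.inl h
      · exact Or.inr h
  constructor
  · rintro ⟨f⟩
    have hfuv : f u = f v := by
      have := hsame (f.comp (SimpleGraph.Embedding.induce S).toHom)
      simpa using this
    refine ⟨SimpleGraph.Coloring.mk
      (fun x => Option.elim x (f u) (fun a => f (a : V))) ?_⟩
    rintro (_ | ⟨a, ha⟩) (_ | ⟨b, hb⟩) hadj <;>
      rw [SimpleGraph.fromRel_adj] at hadj
    · exact absurd rfl hadj.1
    · rcases hadj.2 with (h | h) | h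
      · exact f.valid h
      · rw [hfuv]; exact f.valid h
      · exact absurd h (by simp [ContractAdj])
    · rcases hadj.2 with h | (h | h)
      · exact absurd h (by simp [ContractAdj])
      · exact fun he => f.valid h he.symm
      · rw [hfuv]; exact fun he => f.valid h he.symm
    · have : G.Adj (a : V) (b : V) := by
        rcases hadj.2 with h | h
        · exact h
        · exact (show G.Adj (b : V) (a : V) from h).symm
      exact f.valid this
  · rintro ⟨g⟩
    classical
    obtain ⟨c0⟩ := hex
    set σ := Equiv.swap (c0 ⟨u, hu⟩) (g none) with hσ
    refine ⟨SimpleGraph.Coloring.mk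
      (fun x => if hx : x ∈ S then σ (c0 ⟨x, hx⟩) else g (some ⟨x, hx⟩)) ?_⟩
    intro x y hadj
    have hxy : x ≠ y := hadj.ne
    by_cases hx : x ∈ S <;> by_cases hy : y ∈ S
    · -- both in S
      simp only [dif_pos hx, dif_pos hy]
      intro he
      exact c0.valid (show (G.induce S).Adj ⟨x, hx⟩ ⟨y, hy⟩ from hadj)
        (σ.injective he)
    · -- x ∈ S, y ∉ S : x = u or v, color of x = g none
      simp only [dif_pos hx, dif_neg hy]
      have hcx : c0 ⟨x, hx⟩ = c0 ⟨u, hu⟩ := by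
        rcases hkey x hx y hy hadj with rfl | rfl
        · rfl
        · exact (hsame c0).symm
      rw [hcx]
      have : σ (c0 ⟨u, hu⟩) = g none := Equiv.swap_apply_left _ _
      rw [this]
      have hadj' : (SimpleGraph.fromRel (ContractAdj G u v Sᶜ)).Adj none
          (some ⟨y, hy⟩) := by
        rw [SimpleGraph.fromRel_adj]
        refine ⟨by simp, Or.inl ?_⟩
        show G.Adj u y ∨ G.Adj v y
        rcases hkey x hx y hy hadj with rfl | rfl
        · exact Or.inl hadj
        · exact Or.inr hadj
      exact g.valid hadj'
    · -- y ∈ S, x ∉ S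
      simp only [dif_neg hx, dif_pos hy]
      have hcy : c0 ⟨y, hy⟩ = c0 ⟨u, hu⟩ := by
        rcases hkey y hy x hx hadj.symm with rfl | rfl
        · rfl
        · exact (hsame c0).symm
      rw [hcy]
      have h1 : σ (c0 ⟨u, hu⟩) = g none := Equiv.swap_apply_left _ _
      rw [h1]
      have hadj' : (SimpleGraph.fromRel (ContractAdj G u v Sᶜ)).Adj none
          (some ⟨x, hx⟩) := by
        rw [SimpleGraph.fromRel_adj]
        refine ⟨by simp, Or.inl ?_⟩
        show G.Adj u x ∨ G.Adj v x
        rcases hkey y hy x hx hadj.symm with rfl | rfl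
        · exact Or.inl hadj.symm
        · exact Or.inr hadj.symm
      exact fun he => g.valid hadj' he.symm
    · -- both outside
      simp only [dif_neg hx, dif_neg hy]
      have hadj' : (SimpleGraph.fromRel (ContractAdj G u v Sᶜ)).Adj
          (some ⟨x, hx⟩) (some ⟨y, hy⟩) := by
        rw [SimpleGraph.fromRel_adj]
        exact ⟨by simp [Subtype.ext_iff, hxy], Or.inl hadj⟩
      exact g.valid hadj'
end

section
/- Let G be a graph, r ≥ 1, let C ⊆ V(G) with external neighbourhood exactly S = {u, v} (u, v ∉ C), and suppose every proper r-colouring of G[C ∪ S] assigns u and v different colours, and at least one such colouring exists. Let G' be obtained from G by deleting C and adding the edge uv. Then G is properly r-colourable if and only if G' is properly r-colourable. -/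
/-- Let `C ⊆ V(G)` have external neighbourhood exactly `S = {u, v}` and suppose every
proper `r`-colouring of `G[C ∪ S]` gives `u` and `v` distinct colours, and some such
colouring exists. Let `G'` be obtained from `G` by deleting `C` and adding the edge
`uv`. Then `G` is properly `r`-colourable iff `G'` is. -/
theorem stmt16 {V : Type*} (G : SimpleGraph V) (r : ℕ) (hr : 1 ≤ r)
    (C : Set V) (u v : V) (huC : u ∉ C) (hvC : v ∉ C) (huv : u ≠ v)
    (hN : {w | w ∉ C ∧ ∃ c ∈ C, G.Adj c w} = {u, v})
    (hu : u ∈ C ∪ {u, v}) (hv : v ∈ C ∪ {u, v})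
    (hdiff : ∀ col : (G.induce (C ∪ {u, v})).Coloring (Fin r),
      col ⟨u, hu⟩ ≠ col ⟨v, hv⟩)
    (hex : (G.induce (C ∪ {u, v})).Colorable r) :
    G.Colorable r ↔ (DeleteAddEdge G C u v).Colorable r := by
  classical
  constructor
  · rintro ⟨col⟩
    have hcuv : col u ≠ col v :=
      hdiff (SimpleGraph.Coloring.mk (fun x => col x.val) (fun h => col.valid h))
    refine ⟨SimpleGraph.Coloring.mk (fun w => col w) ?_⟩
    intro x y hxy
    rw [DeleteAddEdge, SimpleGraph.fromRel_adj] at hxy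
    obtain ⟨hne, h⟩ := hxy
    rcases h with (⟨h, _, _⟩ | ⟨rfl, rfl⟩) | (⟨h, _, _⟩ | ⟨rfl, rfl⟩)
    · exact col.valid h
    · exact hcuv
    · exact (col.valid h).symm
    · exact hcuv.symm
  · rintro ⟨col'⟩
    obtain ⟨col₀⟩ := hex
    have huv' : (DeleteAddEdge G C u v).Adj u v := by
      rw [DeleteAddEdge, SimpleGraph.fromRel_adj]
      exact ⟨huv, Or.inl (Or.inr ⟨rfl, rfl⟩)⟩
    have hcol' : col' u ≠ col' v := col'.valid huv'
    have h0 : col₀ ⟨u, hu⟩ ≠ col₀ ⟨v, hv⟩ := hdiff col₀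
    set a := col₀ ⟨u, hu⟩ with ha
    set b := col₀ ⟨v, hv⟩ with hb
    set τ₁ : Equiv.Perm (Fin r) := Equiv.swap a (col' u) with hτ₁
    set τ₂ : Equiv.Perm (Fin r) := Equiv.swap (τ₁ b) (col' v) with hτ₂
    set σ : Equiv.Perm (Fin r) := τ₁.trans τ₂ with hσ
    have hbne : τ₁ b ≠ col' u := by
      intro h
      have : τ₁ b = τ₁ a := by rw [h, hτ₁, Equiv.swap_apply_left]
      exact h0 (τ₁.injective this).symm
    have hσu : σ a = col' u := by
      have h1 : τ₁ a = col' u := by rw [hτ₁]; exact Equiv.swap_apply_left _ _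
      simp only [hσ, Equiv.trans_apply, h1, hτ₂]
      exact Equiv.swap_apply_of_ne_of_ne (Ne.symm hbne) hcol'
    have hσv : σ b = col' v := by
      simp only [hσ, Equiv.trans_apply, hτ₂]
      exact Equiv.swap_apply_left _ _
    refine ⟨SimpleGraph.Coloring.mk
      (fun w => if h : w ∈ C then σ (col₀ ⟨w, Set.mem_union_left _ h⟩) else col' w) ?_⟩
    intro x y hxy
    by_cases hx : x ∈ C <;> by_cases hy : y ∈ C <;>
      simp only [hx, hy, dif_pos, dif_neg, not_false_iff]
    · -- both in C
      have : col₀ ⟨x, Set.mem_union_left _ hx⟩ ≠ col₀ ⟨y, Set.mem_union_left _ hy⟩ :=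
        col₀.valid hxy
      exact fun h => this (σ.injective h)
    · -- x ∈ C, y ∉ C
      have hy2 : y ∈ ({u, v} : Set V) := by
        rw [← hN]; exact ⟨hy, x, hx, hxy⟩
      rw [Set.mem_insert_iff, Set.mem_singleton_iff] at hy2
      rcases hy2 with h2 | h2 <;> rw [h2] at hxy ⊢
      · have : col₀ ⟨x, Set.mem_union_left _ hx⟩ ≠ col₀ ⟨u, hu⟩ := col₀.valid hxy
        intro h; rw [← hσu] at h; exact this (σ.injective h)
      · have : col₀ ⟨x, Set.mem_union_left _ hx⟩ ≠ col₀ ⟨v, hv⟩ := col₀.valid hxy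
        intro h; rw [← hσv] at h; exact this (σ.injective h)
    · -- x ∉ C, y ∈ C
      have hx2 : x ∈ ({u, v} : Set V) := by
        rw [← hN]; exact ⟨hx, y, hy, hxy.symm⟩
      rw [Set.mem_insert_iff, Set.mem_singleton_iff] at hx2
      rcases hx2 with h2 | h2 <;> rw [h2] at hxy ⊢
      · have : col₀ ⟨y, Set.mem_union_left _ hy⟩ ≠ col₀ ⟨u, hu⟩ := col₀.valid hxy.symm
        intro h; rw [← hσu] at h; exact this (σ.injective h.symm)
      · have : col₀ ⟨y, Set.mem_union_left _ hy⟩ ≠ col₀ ⟨v, hv⟩ := col₀.valid hxy.symm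
        intro h; rw [← hσv] at h; exact this (σ.injective h.symm)
    · -- both outside C
      have : (DeleteAddEdge G C u v).Adj x y := by
        rw [DeleteAddEdge, SimpleGraph.fromRel_adj]
        exact ⟨hxy.ne, Or.inl (Or.inl ⟨hxy, hx, hy⟩)⟩
      exact col'.valid this
end

section
/- Let G be a graph containing a protected fan Q of order n ≥ 4 with centre z and ends x, y, and let r ≥ 4. Then G is properly r-colourable if and only if G − (Q \ {x, y, z}) is properly r-colourable. -/
lemma avoid_three {r : ℕ} (hr : 4 ≤ r) (a b c : Fin r) :
    ∃ d : Fin r, d ≠ a ∧ d ≠ b ∧ d ≠ c := by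
  have h3 : ({a, b, c} : Finset (Fin r)).card ≤ 3 :=
    (Finset.card_insert_le _ _).trans
      (Nat.succ_le_succ ((Finset.card_insert_le _ _).trans (by simp)))
  have : (({a, b, c} : Finset (Fin r))ᶜ).Nonempty := by
    rw [← Finset.card_pos, Finset.card_compl, Fintype.card_fin]; omega
  obtain ⟨d, hd⟩ := this
  rw [Finset.mem_compl] at hd
  simp only [Finset.mem_insert, Finset.mem_singleton, not_or] at hd
  exact ⟨d, hd.1, hd.2.1, hd.2.2⟩

/-- If `G` contains a protected fan `Q` of order at least `4` with centre `z` and ends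
`x`, `y`, and `r ≥ 4`, then `G` is properly `r`-colourable iff `G − (Q \ {x, y, z})`
is properly `r`-colourable. -/
theorem stmt17 {V : Type*} (G : SimpleGraph V) (Q : Set V) (z x y : V)
    (hfan : IsProtectedFan G Q z x y) (hord : 4 ≤ Q.ncard) (r : ℕ) (hr : 4 ≤ r) :
    G.Colorable r ↔ (G.induce ((Q \ {x, y, z})ᶜ)).Colorable r := by
  classical
  obtain ⟨n, p, hn1, hp0, hpn, hQ, hinj, hpz, hpath, hcen, hedge, hprot⟩ := hfan
  set S : Set V := (Q \ {x, y, z})ᶜ with hS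
  constructor
  · rintro ⟨C⟩
    exact ⟨SimpleGraph.Coloring.mk (fun v => C v.1) (fun {a b} hab => C.valid hab)⟩
  rintro ⟨C⟩
  -- basic membership facts
  have hnotS : ∀ v, v ∉ S ↔ v ∈ Q ∧ v ≠ x ∧ v ≠ y ∧ v ≠ z := by
    intro v
    simp only [hS, Set.mem_compl_iff, not_not, Set.mem_diff, Set.mem_insert_iff,
      Set.mem_singleton_iff, not_or]
  have hxS : x ∈ S := fun h => h.2 (by simp)
  have hyS : y ∈ S := fun h => h.2 (by simp)
  have hzS : z ∈ S := fun h => h.2 (by simp)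
  -- n ≥ 3
  have himg : {w | ∃ i, i < n ∧ p i = w} = p '' Set.Iio n := by
    ext w; simp only [Set.mem_image, Set.mem_Iio, Set.mem_setOf_eq]
  have hzimg : z ∉ p '' Set.Iio n := by
    rintro ⟨i, hi, hpi⟩; exact hpz i hi hpi
  have hncard : Q.ncard = n + 1 := by
    have h1 : (p '' Set.Iio n).ncard = (Set.Iio n).ncard :=
      Set.ncard_image_of_injOn (fun i hi j hj hij => hinj i j hi hj hij)
    rw [hQ, himg, Set.ncard_insert_of_notMem hzimg ((Set.finite_Iio n).image p), h1,
      ← Finset.coe_Iio, Set.ncard_coe_finset, Nat.card_Iio]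
  have hn3 : 3 ≤ n := by omega
  -- colors and the greedy sequence
  set cx := C ⟨x, hxS⟩ with hcx
  set cy := C ⟨y, hyS⟩ with hcy
  set cz := C ⟨z, hzS⟩ with hcz
  choose next hnext1 hnext2 hnext3 using fun prev => avoid_three hr cz prev cy
  set g : ℕ → Fin r := fun i => next^[i] cx with hg
  have hgsucc : ∀ i, g (i + 1) = next (g i) := fun i =>
    Function.iterate_succ_apply' next i cx
  have hg0 : g 0 = cx := rfl
  -- indices of interior vertices
  have hex : ∀ v, v ∉ S → ∃ i, 0 < i ∧ i + 1 < n ∧ p i = v := by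
    intro v hv
    obtain ⟨hvQ, hvx, hvy, hvz⟩ := (hnotS v).mp hv
    rw [hQ, Set.mem_insert_iff] at hvQ
    rcases hvQ with rfl | ⟨i, hi, rfl⟩
    · exact absurd rfl hvz
    refine ⟨i, ?_, ?_, rfl⟩
    · rcases Nat.eq_zero_or_pos i with rfl | h
      · exact absurd hp0 hvx
      · exact h
    · by_contra h
      have hieq : i = n - 1 := by omega
      rw [hieq] at hvy
      exact hvy hpn
  set c : V → Fin r := fun v =>
    if h : v ∈ S then C ⟨v, h⟩ else g (hex v h).choose with hc
  have hcS : ∀ v (h : v ∈ S), c v = C ⟨v, h⟩ := fun v h => dif_pos h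
  have hcI : ∀ v (h : v ∉ S) i, 0 < i → i + 1 < n → p i = v → c v = g i := by
    intro v h i hi0 hin hpi
    obtain ⟨h1, h2, h3⟩ := (hex v h).choose_spec
    have : (hex v h).choose = i := hinj _ _ (by omega) (by omega) (h3.trans hpi.symm)
    simp only [hc, dif_neg h, this]
  -- vertices p j for interior j are not in S
  have hint : ∀ j, 0 < j → j + 1 < n → p j ∉ S := by
    intro j hj0 hjn
    rw [hnotS]
    refine ⟨?_, ?_, ?_, hpz _ (by omega)⟩
    · rw [hQ]; exact Set.mem_insert_iff.mpr (Or.inr ⟨j, by omega, rfl⟩)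
    · intro h; have := hinj j 0 (by omega) (by omega) (h.trans hp0.symm); omega
    · intro h; have := hinj j (n - 1) (by omega) (by omega) (h.trans hpn.symm); omega
  -- the key asymmetric step
  have key : ∀ u v, G.Adj u v → u ∉ S → c u ≠ c v := by
    intro u v hadj hu
    obtain ⟨hi0, hin, hpi⟩ := (hex u hu).choose_spec
    set i := (hex u hu).choose with hidef
    have hcu : c u = g i := hcI u hu i hi0 hin hpi
    obtain ⟨huQ, hux, huy, huz⟩ := (hnotS u).mp hu
    have hvQ : v ∈ Q := hprot u huQ hux huy huz hadj
    rw [hQ, Set.mem_insert_iff] at hvQ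
    obtain ⟨k, hik⟩ : ∃ k, i = k + 1 := ⟨i - 1, by omega⟩
    rcases hvQ with rfl | ⟨j, hj, rfl⟩
    · -- v = z
      rw [hcu, hcS v hzS, hik, hgsucc]
      exact hnext1 _
    · -- v = p j
      have hadj' : G.Adj (p i) (p j) := by rw [hpi]; exact hadj
      rcases hedge i j (by omega) hj hadj' with hj1 | hj1
      · -- j = i + 1
        subst hj1
        rcases (by omega : i + 1 + 1 < n ∨ i + 1 = n - 1) with h2 | h2
        · have hvS : p (i + 1) ∉ S := hint _ (by omega) h2
          rw [hcu, hcI _ hvS (i + 1) (by omega) h2 rfl, hgsucc]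
          exact (hnext2 _).symm
        · have hpy : p (i + 1) = y := by rw [← hpn, h2]
          have hcv : c (p (i + 1)) = cy := by rw [hpy, hcS y hyS]
          rw [hcu, hcv, hik, hgsucc]
          exact hnext3 _
      · -- i = j + 1
        rcases Nat.eq_zero_or_pos j with rfl | hk
        · have hpx : p 0 = x := hp0
          have : c (p 0) = cx := by rw [hpx, hcS x hxS]
          rw [hcu, this, hj1, hgsucc, ← hg0]
          exact hnext2 _
        · have hjn : j + 1 < n := by omega
          have hvS : p j ∉ S := hint _ hk hjn
          rw [hcu, hcI _ hvS j hk hjn rfl, hj1, hgsucc]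
          exact hnext2 _
  refine ⟨SimpleGraph.Coloring.mk c ?_⟩
  intro u v hadj
  by_cases hu : u ∈ S
  · by_cases hv : v ∈ S
    · rw [hcS u hu, hcS v hv]
      exact C.valid (show (G.induce S).Adj ⟨u, hu⟩ ⟨v, hv⟩ from hadj)
    · exact fun h => key v u hadj.symm hv h.symm
  · exact key u v hadj hu
end
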